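/- arXiv:2511.00219 — 3 statements merged into one kernel-verified Lean document; each statement's English description precedes it below -/
import Mathlib

section
/- For every Q ∈ ℝ^K, P ∈ (0,∞)^K and all sequences (αₙ) and (βₙ) of positive reals with αₙ/βₙ → 0 as n → ∞, the limit as n → ∞ of D_{φ_{αₙ,βₙ,1/βₙ}}(Q,P) equals Σ_{k=1}^K |q_k − p_k| = ‖Q−P‖₁. -/
open Filter Real Set

/-- The generator φ_{α,β,c̃} from Broniatowski & Stummer. -/
noncomputable def phi (α β c t : ℝ) : ℝ :=
  if t = 1 then 0
  else c * α * (Real.sqrt (1 + β ^ 2 * ((1 - t) / α) ^ 2) - 1 +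
    Real.log (2 * (Real.sqrt (1 + β ^ 2 * ((1 - t) / α) ^ 2) - 1) /
      (β ^ 2 * ((1 - t) / α) ^ 2)))

/-- Generalized φ-divergence D_φ(Q,P) = Σ_k p_k · φ(q_k / p_k). -/
noncomputable def Dphi (K : ℕ) (φ : ℝ → ℝ) (Q P : Fin K → ℝ) : ℝ :=
  ∑ k, P k * φ (Q k / P k)

lemma xlogx : Tendsto (fun x : ℝ => x * Real.log x) (nhdsWithin 0 (Set.Ioi 0)) (nhds 0) := by
  have h := Real.continuous_mul_log.tendsto 0
  simp only [Real.log_zero, mul_zero] at h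
  exact h.mono_left nhdsWithin_le_nhds

lemma gmain (r : ℝ) (hr : r ≠ 0) :
    Tendsto (fun ε : ℝ => Real.sqrt (ε^2 + r^2) - ε +
      ε * Real.log (2*ε*(Real.sqrt (ε^2 + r^2) - ε)/r^2))
      (nhdsWithin 0 (Set.Ioi 0)) (nhds (|r|)) := by
  have hS : Tendsto (fun ε : ℝ => Real.sqrt (ε^2 + r^2)) (nhdsWithin 0 (Set.Ioi 0))
      (nhds (|r|)) := by
    have hc : Continuous fun ε : ℝ => Real.sqrt (ε^2 + r^2) := by continuity
    have h0 := hc.tendsto 0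
    norm_num [Real.sqrt_sq_eq_abs] at h0
    exact h0.mono_left nhdsWithin_le_nhds
  have hid : Tendsto (fun ε : ℝ => ε) (nhdsWithin 0 (Set.Ioi 0)) (nhds 0) :=
    tendsto_id.mono_left nhdsWithin_le_nhds
  have hpos : ∀ ε ∈ Set.Ioi (0:ℝ), 0 < Real.sqrt (ε^2 + r^2) - ε := by
    intro ε hε
    have h1 : ε = Real.sqrt (ε^2) := (Real.sqrt_sq (le_of_lt hε)).symm
    have h2 : Real.sqrt (ε^2) < Real.sqrt (ε^2 + r^2) :=
      Real.sqrt_lt_sqrt (sq_nonneg _) (by nlinarith [sq_pos_of_ne_zero hr])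
    linarith [h1 ▸ h2]
  have hlog : Tendsto (fun ε : ℝ => ε * Real.log (2*ε*(Real.sqrt (ε^2 + r^2) - ε)/r^2))
      (nhdsWithin 0 (Set.Ioi 0)) (nhds 0) := by
    have hL : Tendsto (fun ε : ℝ => Real.log (2*(Real.sqrt (ε^2 + r^2) - ε)/r^2))
        (nhdsWithin 0 (Set.Ioi 0)) (nhds (Real.log (2*|r|/r^2))) := by
      have hinner : Tendsto (fun ε : ℝ => 2*(Real.sqrt (ε^2 + r^2) - ε)/r^2)
          (nhdsWithin 0 (Set.Ioi 0)) (nhds (2*(|r| - 0)/r^2)) :=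
        ((hS.sub hid).const_mul 2).div_const _
      have hcl : ContinuousAt Real.log (2*(|r| - 0)/r^2) :=
        Real.continuousAt_log (by simp; positivity)
      simpa [Function.comp_def] using hcl.tendsto.comp hinner
    have hsum : Tendsto (fun ε : ℝ => ε * Real.log ε +
        ε * Real.log (2*(Real.sqrt (ε^2 + r^2) - ε)/r^2))
        (nhdsWithin 0 (Set.Ioi 0)) (nhds 0) := by
      have := xlogx.add (hid.mul hL)
      simpa using this
    refine hsum.congr' ?_
    filter_upwards [self_mem_nhdsWithin] with ε hε
    have hε' : (0:ℝ) < ε := hε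
    have hs := hpos ε hε
    have h1 : 2*ε*(Real.sqrt (ε^2 + r^2) - ε)/r^2
        = ε * (2*(Real.sqrt (ε^2 + r^2) - ε)/r^2) := by ring
    rw [h1, Real.log_mul (ne_of_gt hε') (by positivity), mul_add]
  have := (hS.sub hid).add hlog
  simpa using this

lemma phi_eq (α β p q : ℝ) (hα : 0 < α) (hβ : 0 < β) (hp : 0 < p) (hq : q ≠ p) :
    p * phi α β (1/β) (q/p) =
      p * (Real.sqrt ((α/β)^2 + (1 - q/p)^2) - α/β +
        (α/β) * Real.log (2*(α/β)*(Real.sqrt ((α/β)^2 + (1 - q/p)^2) - α/β)/(1 - q/p)^2)) := by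
  have ht : q/p ≠ 1 := fun h => hq ((div_eq_one_iff_eq hp.ne').mp h)
  have hrr : (1:ℝ) - q/p ≠ 0 := sub_ne_zero.mpr (Ne.symm ht)
  rw [phi, if_neg ht]
  have hX : Real.sqrt (1 + β^2*((1-q/p)/α)^2)
      = Real.sqrt ((α/β)^2 + (1-q/p)^2) * (β/α) := by
    rw [show (1:ℝ) + β^2*((1-q/p)/α)^2 = ((α/β)^2 + (1-q/p)^2) * (β/α)^2 by
      field_simp]
    rw [Real.sqrt_mul (by positivity), Real.sqrt_sq (by positivity)]
  rw [show (1:ℝ) + β ^ 2 * ((1 - q/p) / α) ^ 2 = 1 + β^2*((1-q/p)/α)^2 from rfl, hX]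
  have hA : 2*(Real.sqrt ((α/β)^2 + (1-q/p)^2) * (β/α) - 1)/(β^2*((1-q/p)/α)^2)
      = 2*(α/β)*(Real.sqrt ((α/β)^2 + (1-q/p)^2) - α/β)/(1-q/p)^2 := by
    have hd1 : β^2*((1-q/p)/α)^2 ≠ 0 :=
      mul_ne_zero (pow_ne_zero _ hβ.ne') (pow_ne_zero _ (div_ne_zero hrr hα.ne'))
    have hd2 : ((1:ℝ)-q/p)^2 ≠ 0 := pow_ne_zero _ hrr
    rw [div_eq_div_iff hd1 hd2]
    generalize Real.sqrt ((α/β)^2 + (1 - q/p)^2) = S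
    field_simp
  rw [hA]
  generalize Real.sqrt ((α/β)^2 + (1 - q/p)^2) = S
  generalize Real.log (2*(α/β)*(S - α/β)/(1 - q/p)^2) = L
  field_simp

theorem stmt_3 (K : ℕ) (Q P : Fin K → ℝ) (hP : ∀ k, 0 < P k)
    (a b : ℕ → ℝ) (ha : ∀ n, 0 < a n) (hb : ∀ n, 0 < b n)
    (hab : Filter.Tendsto (fun n => a n / b n) Filter.atTop (nhds 0)) :
    Filter.Tendsto (fun n => Dphi K (phi (a n) (b n) (1 / b n)) Q P) Filter.atTop
      (nhds (∑ k, |Q k - P k|)) := by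
  unfold Dphi
  apply tendsto_finset_sum
  intro k _
  by_cases hq : Q k = P k
  · have h1 : Q k / P k = 1 := by rw [hq]; exact div_self (hP k).ne'
    have h2 : ∀ n, P k * phi (a n) (b n) (1/b n) (Q k / P k) = 0 := fun n => by
      simp [h1, phi]
    rw [show |Q k - P k| = 0 by simp [hq]]
    exact Tendsto.congr (fun n => (h2 n).symm) tendsto_const_nhds
  · have hε : Tendsto (fun n => a n / b n) atTop (nhdsWithin 0 (Set.Ioi 0)) := by
      rw [tendsto_nhdsWithin_iff]
      exact ⟨hab, Filter.Eventually.of_forall fun n => div_pos (ha n) (hb n)⟩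
    have hr : (1:ℝ) - Q k / P k ≠ 0 :=
      sub_ne_zero.mpr fun h => hq ((div_eq_one_iff_eq (hP k).ne').mp h.symm)
    have hmain := ((gmain _ hr).comp hε).const_mul (P k)
    have habs : P k * |1 - Q k / P k| = |Q k - P k| := by
      have h3 : P k * |1 - Q k / P k| = |P k * (1 - Q k / P k)| := by
        rw [abs_mul, abs_of_pos (hP k)]
      rw [h3, show P k * (1 - Q k / P k) = P k - Q k by rw [mul_sub, mul_one, mul_div_cancel₀ _ (hP k).ne'], abs_sub_comm]
    rw [habs] at hmain
    refine hmain.congr fun n => ?_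
    show P k * _ = _
    exact (phi_eq (a n) (b n) (P k) (Q k) (ha n) (hb n) (hP k) hq).symm
end

section
/- For every α ∈ (0,∞), β ∈ (0,∞) and c̃ ∈ (0,∞), the function φ_{α,β,c̃} is strictly convex on ℝ. -/
noncomputable def fAux (u : ℝ) : ℝ :=
  Real.sqrt (1 + u ^ 2) - 1 + Real.log 2 - Real.log (1 + Real.sqrt (1 + u ^ 2))

lemma sq_lt (u : ℝ) : (0:ℝ) < 1 + u ^ 2 := by positivity

lemma sqrt_pos' (u : ℝ) : 0 < Real.sqrt (1 + u ^ 2) :=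
  Real.sqrt_pos.2 (sq_lt u)

lemma sqrt_sq' (u : ℝ) : Real.sqrt (1 + u ^ 2) ^ 2 = 1 + u ^ 2 :=
  Real.sq_sqrt (sq_lt u).le

lemma one_le_sqrt' (u : ℝ) : 1 ≤ Real.sqrt (1 + u ^ 2) := by
  nlinarith [sqrt_sq' u, sqrt_pos' u, sq_nonneg u]

lemma hasDerivAt_sqrtAux (u : ℝ) :
    HasDerivAt (fun x => Real.sqrt (1 + x ^ 2)) (u / Real.sqrt (1 + u ^ 2)) u := by
  have h1 : HasDerivAt (fun x : ℝ => 1 + x ^ 2) (2 * u) u := by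
    simpa using (hasDerivAt_pow 2 u).const_add 1
  have := (Real.hasDerivAt_sqrt (sq_lt u).ne').comp u h1
  refine this.congr_deriv ?_
  field_simp

lemma hasDerivAt_fAux (u : ℝ) :
    HasDerivAt fAux (u / (1 + Real.sqrt (1 + u ^ 2))) u := by
  set s := Real.sqrt (1 + u ^ 2) with hs
  have hspos := sqrt_pos' u
  have h1s : (0:ℝ) < 1 + s := by linarith
  have hsq := sqrt_sq' u
  have hd : HasDerivAt (fun x => Real.sqrt (1 + x ^ 2)) (u / s) u := hasDerivAt_sqrtAux u
  have hlog : HasDerivAt (fun x => Real.log (1 + Real.sqrt (1 + x ^ 2)))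
      ((u / s) / (1 + s)) u := by
    have := (Real.hasDerivAt_log h1s.ne').comp u (hd.const_add 1)
    refine this.congr_deriv ?_
    field_simp
  have : HasDerivAt fAux (u / s - (u / s) / (1 + s)) u := by
    unfold fAux
    exact (((hd.sub_const 1).add_const (Real.log 2)).sub hlog)
  refine this.congr_deriv ?_
  have hs0 : s ≠ 0 := hspos.ne'
  field_simp
  ring

lemma hasDerivAt_g (u : ℝ) :
    HasDerivAt (fun x => x / (1 + Real.sqrt (1 + x ^ 2)))
      (1 / (Real.sqrt (1 + u ^ 2) * (1 + Real.sqrt (1 + u ^ 2)))) u := by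
  set s := Real.sqrt (1 + u ^ 2) with hs
  have hspos := sqrt_pos' u
  have h1s : (0:ℝ) < 1 + s := by linarith
  have hsq := sqrt_sq' u
  have hd : HasDerivAt (fun x => (1:ℝ) + Real.sqrt (1 + x ^ 2)) (u / s) u :=
    (hasDerivAt_sqrtAux u).const_add 1
  have := (hasDerivAt_id u).div hd h1s.ne'
  refine this.congr_deriv ?_
  have hs0 : s ≠ 0 := hspos.ne'
  simp only [id, ← hs] at hsq ⊢
  field_simp
  nlinarith [hsq]

lemma strictConvex_fAux : StrictConvexOn ℝ Set.univ fAux := by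
  have hdiff : ∀ u, HasDerivAt fAux (u / (1 + Real.sqrt (1 + u ^ 2))) u := hasDerivAt_fAux
  have hcont : Continuous fAux :=
    continuous_iff_continuousAt.2 fun x => (hdiff x).continuousAt
  have hmono : StrictMono (deriv fAux) := by
    have hEq : deriv fAux = fun u => u / (1 + Real.sqrt (1 + u ^ 2)) := by
      funext u; exact (hdiff u).deriv
    rw [hEq]
    apply strictMono_of_hasDerivAt_pos hasDerivAt_g
    intro u
    have hspos := sqrt_pos' u
    have h1s : (0:ℝ) < 1 + Real.sqrt (1 + u ^ 2) := by linarith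
    positivity
  exact hmono.strictConvexOn_univ_of_deriv hcont

lemma phi_eq_s11 (α β c : ℝ) (hα : 0 < α) (hβ : 0 < β) (t : ℝ) :
    phi α β c t = c * α * fAux (β * ((1 - t) / α)) := by
  unfold phi fAux
  by_cases ht : t = 1
  · simp only [ht, if_pos]
    norm_num
  · rw [if_neg ht]
    have hu : β * ((1 - t) / α) ≠ 0 := by
      have h1 : (1 - t) ≠ 0 := fun h => ht (by linarith)
      positivity
    set u := β * ((1 - t) / α) with hudef
    have hu2 : β ^ 2 * ((1 - t) / α) ^ 2 = u ^ 2 := by rw [hudef]; ring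
    rw [hu2]
    set s := Real.sqrt (1 + u ^ 2) with hs
    have hsq := sqrt_sq' u
    have hsgt : 1 < s := by
      have := one_le_sqrt' u
      rcases this.lt_or_eq with h | h
      · exact h
      · exfalso; apply hu; nlinarith
    have h1s : (0:ℝ) < 1 + s := by linarith
    have key : 2 * (s - 1) / u ^ 2 = 2 / (1 + s) := by
      have hu2pos : (0:ℝ) < u ^ 2 := by positivity
      field_simp
      nlinarith
    rw [key, Real.log_div (by norm_num) h1s.ne']
    ring

theorem stmt_11 (α β c : ℝ) (hα : 0 < α) (hβ : 0 < β) (hc : 0 < c) :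
    StrictConvexOn ℝ Set.univ (phi α β c) := by
  have heq : phi α β c = fun t => c * α * fAux (β * ((1 - t) / α)) := by
    funext t; exact phi_eq_s11 α β c hα hβ t
  rw [heq]
  refine ⟨convex_univ, ?_⟩
  intro x _ y _ hxy a b ha hb hab
  have hL : β * ((1 - (a * x + b * y)) / α)
      = a * (β * ((1 - x) / α)) + b * (β * ((1 - y) / α)) := by
    field_simp
    nlinarith [hab]
  have hne : β * ((1 - x) / α) ≠ β * ((1 - y) / α) := by
    intro h
    have hβ0 : β ≠ 0 := hβ.ne'
    have hα0 : α ≠ 0 := hα.ne'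
    field_simp at h
    exact hxy (by linarith)
  have hstrict := strictConvex_fAux.2 (Set.mem_univ (β * ((1 - x) / α)))
    (Set.mem_univ (β * ((1 - y) / α))) hne ha hb hab
  simp only [smul_eq_mul] at hstrict ⊢
  rw [hL]
  have hca : 0 < c * α := by positivity
  calc c * α * fAux (a * (β * ((1 - x) / α)) + b * (β * ((1 - y) / α)))
      < c * α * (a * fAux (β * ((1 - x) / α)) + b * fAux (β * ((1 - y) / α))) :=
        (mul_lt_mul_iff_right₀ hca).2 (by simpa using hstrict)
    _ = a * (c * α * fAux (β * ((1 - x) / α))) + b * (c * α * fAux (β * ((1 - y) / α))) := by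
        ring
end

section
/- For every α ∈ (0,∞), β ∈ (0,∞), c̃ ∈ (0,∞), every P ∈ (0,∞)^K, σ ∈ (0,∞)^K and all Q, Q* ∈ ℝ^K, the scaled shift divergence satisfies D^{new}_{φ_{α,β,c̃},P,σ}(Q,Q*) ≥ 0, with equality if and only if Q = Q*. -/
/-- Scaled shift divergence D^{new}_{φ,P,σ}(Q,Q*) = Σ_k p_k · φ((q_k − q*_k)/(p_k σ_k) + 1). -/
noncomputable def Dnew (K : ℕ) (φ : ℝ → ℝ) (P σ Q Qs : Fin K → ℝ) : ℝ :=
  ∑ k, P k * φ ((Q k - Qs k) / (P k * σ k) + 1)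

lemma phi_pos {α β c : ℝ} (hα : 0 < α) (hβ : 0 < β) (hc : 0 < c)
    {t : ℝ} (ht : t ≠ 1) : 0 < phi α β c t := by
  have h1t : (1 : ℝ) - t ≠ 0 := by intro h; apply ht; linarith
  have hx : 0 < β ^ 2 * ((1 - t) / α) ^ 2 := by
    have : (1 - t) / α ≠ 0 := div_ne_zero h1t hα.ne'
    positivity
  rw [phi, if_neg ht]
  set s : ℝ := β ^ 2 * ((1 - t) / α) ^ 2 with hs
  set u : ℝ := Real.sqrt (1 + s) with hu
  have hu1 : 1 < u := by
    have : Real.sqrt 1 < Real.sqrt (1 + s) :=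
      Real.sqrt_lt_sqrt (by norm_num) (by linarith)
    simpa using this
  have husq : u ^ 2 = 1 + s := Real.sq_sqrt (by linarith)
  have hs_eq : s = (u - 1) * (u + 1) := by nlinarith
  have hrw : 2 * (u - 1) / s = 2 / (u + 1) := by
    rw [hs_eq, div_eq_div_iff (by nlinarith) (by linarith)]
    ring
  rw [hrw]
  have hlog : Real.log ((u + 1) / 2) ≤ (u + 1) / 2 - 1 :=
    Real.log_le_sub_one_of_pos (by linarith)
  have hlog2 : Real.log (2 / (u + 1)) = -Real.log ((u + 1) / 2) := by
    rw [← Real.log_inv]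
    congr 1
    field_simp
  have : 0 < u - 1 + Real.log (2 / (u + 1)) := by
    rw [hlog2]; nlinarith
  exact mul_pos (mul_pos hc hα) this

theorem stmt_17 (K : ℕ) (α β c : ℝ) (hα : 0 < α) (hβ : 0 < β) (hc : 0 < c)
    (P σ : Fin K → ℝ) (hP : ∀ k, 0 < P k) (hσ : ∀ k, 0 < σ k)
    (Q Qs : Fin K → ℝ) :
    0 ≤ Dnew K (phi α β c) P σ Q Qs ∧
    (Dnew K (phi α β c) P σ Q Qs = 0 ↔ Q = Qs) := by
  have hterm : ∀ k : Fin K, 0 ≤ P k * phi α β c ((Q k - Qs k) / (P k * σ k) + 1) := by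
    intro k
    by_cases h : (Q k - Qs k) / (P k * σ k) + 1 = 1
    · rw [h, phi, if_pos rfl, mul_zero]
    · exact le_of_lt (mul_pos (hP k) (phi_pos hα hβ hc h))
  constructor
  · exact Finset.sum_nonneg fun k _ => hterm k
  · constructor
    · intro h
      funext k
      have hzero : ∀ k ∈ Finset.univ, P k * phi α β c ((Q k - Qs k) / (P k * σ k) + 1) = 0 :=
        (Finset.sum_eq_zero_iff_of_nonneg fun k _ => hterm k).mp h
      have hk := hzero k (Finset.mem_univ k)
      by_contra hne
      have hargs : (Q k - Qs k) / (P k * σ k) + 1 ≠ 1 := by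
        intro h1
        apply hne
        have : (Q k - Qs k) / (P k * σ k) = 0 := by linarith
        have hden : P k * σ k ≠ 0 := (mul_pos (hP k) (hσ k)).ne'
        have := (div_eq_zero_iff.mp this).resolve_right hden
        linarith
      have := mul_pos (hP k) (phi_pos hα hβ hc hargs)
      linarith
    · intro h
      subst h
      simp [Dnew, phi]
end
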